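/- arXiv:1510.05323 — 4 statements merged into one kernel-verified Lean document; each statement's English description precedes it below -/
import Mathlib

section
/- Let k be a commutative ring which is a ℚ-algebra, A an associative unital k-algebra, λ ∈ k, and P a Rota–Baxter operator of weight λ on A. Then the k-linear map P̄ : A^ℕ → A^ℕ defined by P̄(a)_0 = P(a_0) and P̄(a)_n = a_{n−1} for n ≥ 1 is a Rota–Baxter operator of weight λ on the k-algebra (A^ℕ, ·^λ): for all a, b ∈ A^ℕ, P̄(a) ·^λ P̄(b) = P̄(P̄(a) ·^λ b + a ·^λ P̄(b) + λ·(a ·^λ b)). -/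
/-- The `lam`-weighted Hurwitz product on sequences:
`(a ·^lam b)_n = ∑_{r+s+t=n} (n!/(r!·s!·t!)) · lam^t · a_{r+t} · b_{s+t}`,
the sum ranging over triples `(r,s,t)` with `r+s+t = n`, enumerated as
`r = x.1`, `s = y.1`, `t = y.2`. -/
noncomputable def hur {k A : Type*} [CommRing k] [Ring A] [Algebra k A]
    (lam : k) (a b : ℕ → A) : ℕ → A := fun n =>
  ∑ x ∈ Finset.HasAntidiagonal.antidiagonal n, ∑ y ∈ Finset.HasAntidiagonal.antidiagonal x.2,
    (n.factorial / (x.1.factorial * y.1.factorial * y.2.factorial)) •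
      (lam ^ y.2 • (a (x.1 + y.2) * b (y.1 + y.2)))

/-- The sequence `J = (1,0,0,…)`, the unit for the weighted Hurwitz products. -/
def Jseq (A : Type*) [One A] [Zero A] : ℕ → A := fun n => if n = 0 then 1 else 0

/-- The lift `P̄` of an operator `P : A → A` to sequences: `P̄(a)_0 = P(a_0)`,
`P̄(a)_n = a_{n−1}` for `n ≥ 1`. -/
def Pbar {A : Type*} (P : A → A) (a : ℕ → A) : ℕ → A := fun n =>
  match n with
  | 0 => P (a 0)
  | m + 1 => a m

/-!
The shift `σ(a)_n = a_{n+1}` is a `λ`-derivation of the Hurwitz product,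
`σ(a · b) = σa · b + a · σb + λ σa · σb`: coordinatewise this is the Pascal recursion
expressing the trinomial coefficient `(r+s+t)!/(r! s! t!)` as the sum of those of
`(r-1, s, t)`, `(r, s-1, t)` and `(r, s, t-1)`, the last one paying for a factor `λ`.
Since `σ ∘ P̄ = id`, the coordinates `n + 1` of the Rota–Baxter identity for `P̄` are this
Leibniz rule applied to `P̄a, P̄b`, and its coordinate `0` is the Rota–Baxter identity for `P`,
because `(a · b)_0 = a_0 b_0`.
-/

open Finset

def trinomial (r s t : ℕ) : ℕ := (r + s + t).choose r * (s + t).choose s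

theorem factorial_div_eq_trinomial (r s t : ℕ) :
    (r + s + t).factorial / (r.factorial * s.factorial * t.factorial) = trinomial r s t := by
  have hr := Nat.choose_mul_factorial_mul_factorial (Nat.le_add_right r (s + t))
  have hs := Nat.choose_mul_factorial_mul_factorial (Nat.le_add_right s t)
  rw [Nat.add_sub_cancel_left] at hr hs
  rw [← add_assoc] at hr
  have hfac :
      (r + s + t).factorial = trinomial r s t * (r.factorial * s.factorial * t.factorial) := by
    rw [trinomial, ← hr, ← hs]
    ring
  rw [hfac, Nat.mul_div_cancel _ (by positivity)]

theorem trinomial_pascal {r s t : ℕ} (h : 0 < r + s + t) :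
    trinomial r s t =
      (if r = 0 then 0 else trinomial (r - 1) s t) +
      (if s = 0 then 0 else trinomial r (s - 1) t) +
      (if t = 0 then 0 else trinomial r s (t - 1)) := by
  rcases r with _ | r <;> rcases s with _ | s <;> rcases t with _ | t <;>
    simp only [trinomial, Nat.add_sub_cancel, if_true, if_false, Nat.succ_ne_zero, add_zero,
      zero_add, ← add_assoc, Nat.add_right_comm _ 1, Nat.choose_succ_succ, Nat.choose_zero_right,
      Nat.choose_self, Nat.choose_succ_self, Nat.lt_irrefl] at h ⊢ <;>
    ring

section TripleSum

variable {M : Type*} [AddCommMonoid M]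

def tripleSum (n : ℕ) (f : ℕ → ℕ → ℕ → M) : M :=
  ∑ x ∈ antidiagonal n, ∑ y ∈ antidiagonal x.2, f x.1 y.1 y.2

theorem tripleSum_congr {n : ℕ} {f g : ℕ → ℕ → ℕ → M}
    (h : ∀ r s t, r + s + t = n → f r s t = g r s t) : tripleSum n f = tripleSum n g := by
  refine sum_congr rfl fun x hx => sum_congr rfl fun y hy => h _ _ _ ?_
  rw [HasAntidiagonal.mem_antidiagonal] at hx hy
  omega

theorem tripleSum_add (n : ℕ) (f g : ℕ → ℕ → ℕ → M) :
    tripleSum n (fun r s t => f r s t + g r s t) = tripleSum n f + tripleSum n g := by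
  simp only [tripleSum, sum_add_distrib]

theorem tripleSum_smul {R : Type*} [Monoid R] [DistribMulAction R M] (c : R) (n : ℕ)
    (f : ℕ → ℕ → ℕ → M) : tripleSum n (fun r s t => c • f r s t) = c • tripleSum n f := by
  simp only [tripleSum, smul_sum]

theorem tripleSum_succ_of_fst (n : ℕ) (g : ℕ → ℕ → ℕ → M) :
    tripleSum (n + 1) (fun r s t => if r = 0 then 0 else g (r - 1) s t) = tripleSum n g := by
  simp [tripleSum, Nat.sum_antidiagonal_succ]

theorem tripleSum_succ_of_snd (n : ℕ) (g : ℕ → ℕ → ℕ → M) :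
    tripleSum (n + 1) (fun r s t => if s = 0 then 0 else g r (s - 1) t) = tripleSum n g := by
  rw [tripleSum, Nat.sum_antidiagonal_succ']
  simp [Nat.sum_antidiagonal_succ, tripleSum]

theorem tripleSum_succ_of_thd (n : ℕ) (g : ℕ → ℕ → ℕ → M) :
    tripleSum (n + 1) (fun r s t => if t = 0 then 0 else g r s (t - 1)) = tripleSum n g := by
  simp [tripleSum, Nat.sum_antidiagonal_succ']

end TripleSum

def seqShift {M : Type*} (a : ℕ → M) : ℕ → M := fun n => a (n + 1)

section Hurwitz

variable {k A : Type*} [CommRing k] [Ring A] [Algebra k A]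

noncomputable def hurTerm (lam : k) (a b : ℕ → A) (r s t : ℕ) : A :=
  trinomial r s t • (lam ^ t • (a (r + t) * b (s + t)))

theorem hur_eq_tripleSum (lam : k) (a b : ℕ → A) (n : ℕ) :
    hur lam a b n = tripleSum n (hurTerm lam a b) := by
  refine sum_congr rfl fun x hx => sum_congr rfl fun y hy => ?_
  rw [HasAntidiagonal.mem_antidiagonal] at hx hy
  rw [hurTerm, ← factorial_div_eq_trinomial, add_assoc, hy, hx]

theorem hurTerm_pascal (lam : k) (a b : ℕ → A) {r s t : ℕ} (h : 0 < r + s + t) :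
    hurTerm lam a b r s t =
      (if r = 0 then 0 else hurTerm lam (seqShift a) b (r - 1) s t) +
      (if s = 0 then 0 else hurTerm lam a (seqShift b) r (s - 1) t) +
      (if t = 0 then 0 else lam • hurTerm lam (seqShift a) (seqShift b) r s (t - 1)) := by
  rw [hurTerm, trinomial_pascal h, add_smul, add_smul]
  congr 1
  congr 1
  · cases r <;> simp [hurTerm, seqShift, Nat.add_right_comm]
  · cases s <;> simp [hurTerm, seqShift, Nat.add_right_comm]
  · cases t <;> simp [hurTerm, seqShift, ← add_assoc, smul_comm lam, pow_succ', mul_smul]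

theorem hur_succ (lam : k) (a b : ℕ → A) (n : ℕ) :
    hur lam a b (n + 1) =
      hur lam (seqShift a) b n + hur lam a (seqShift b) n +
        lam • hur lam (seqShift a) (seqShift b) n := by
  simp only [hur_eq_tripleSum]
  rw [tripleSum_congr fun r s t h => hurTerm_pascal lam a b (h ▸ n.succ_pos), tripleSum_add,
    tripleSum_add, tripleSum_succ_of_fst, tripleSum_succ_of_snd,
    tripleSum_succ_of_thd n fun r s t => lam • _, tripleSum_smul]

theorem hur_zero (lam : k) (a b : ℕ → A) : hur lam a b 0 = a 0 * b 0 := by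
  simp [hur]

end Hurwitz

section Pbar

variable {M : Type*} (P : M → M)

theorem seqShift_Pbar (a : ℕ → M) : seqShift (Pbar P a) = a := rfl

theorem Pbar_add [Add M] (hP : ∀ x y, P (x + y) = P x + P y) (a b : ℕ → M) :
    Pbar P (a + b) = Pbar P a + Pbar P b := by
  funext n
  cases n <;> simp [Pbar, hP]

theorem Pbar_smul {R : Type*} [SMul R M] (hP : ∀ (c : R) x, P (c • x) = c • P x) (c : R)
    (a : ℕ → M) : Pbar P (c • a) = c • Pbar P a := by
  funext n
  cases n <;> simp [Pbar, hP]

end Pbar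

theorem stmt9_general {k A : Type*} [CommRing k] [Ring A] [Algebra k A] (lam : k)
    (P : A → A)
    (hPadd : ∀ x y : A, P (x + y) = P x + P y)
    (hPsmul : ∀ (c : k) (x : A), P (c • x) = c • P x)
    (hPRB : ∀ x y : A, P x * P y = P (P x * y + x * P y + lam • (x * y))) :
    (∀ a b : ℕ → A, Pbar P (a + b) = Pbar P a + Pbar P b) ∧
    (∀ (c : k) (a : ℕ → A), Pbar P (c • a) = c • Pbar P a) ∧
    (∀ a b : ℕ → A,
      hur lam (Pbar P a) (Pbar P b) =
        Pbar P (hur lam (Pbar P a) b + hur lam a (Pbar P b) + lam • hur lam a b)) := by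
  refine ⟨Pbar_add P hPadd, Pbar_smul P hPsmul, fun a b => funext fun n => ?_⟩
  cases n with
  | zero => simp only [hur_zero, Pbar, hPRB, Pi.add_apply, Pi.smul_apply]
  | succ n =>
    rw [hur_succ, seqShift_Pbar, seqShift_Pbar, add_comm (hur lam a _ n)]
    rfl

/-- If `P` is a Rota–Baxter operator of weight `λ` on `A`, then the
`k`-linear map `P̄` is a Rota–Baxter operator of weight `λ` on `(A^ℕ, ·^λ)`. -/
theorem stmt9 {k A : Type*} [CommRing k] [Algebra ℚ k] [Ring A] [Algebra k A] (lam : k)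
    (P : A → A)
    (hPadd : ∀ x y : A, P (x + y) = P x + P y)
    (hPsmul : ∀ (c : k) (x : A), P (c • x) = c • P x)
    (hPRB : ∀ x y : A, P x * P y = P (P x * y + x * P y + lam • (x * y))) :
    (∀ a b : ℕ → A, Pbar P (a + b) = Pbar P a + Pbar P b) ∧
    (∀ (c : k) (a : ℕ → A), Pbar P (c • a) = c • Pbar P a) ∧
    (∀ a b : ℕ → A,
      hur lam (Pbar P a) (Pbar P b) =
        Pbar P (hur lam (Pbar P a) b + hur lam a (Pbar P b) + lam • hur lam a b)) :=
  stmt9_general lam P hPadd hPsmul hPRB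
end

section
/- Let k be a commutative ring which is a ℚ-algebra, A an associative unital k-algebra, and λ ∈ k. The shift operator ∂ : A^ℕ → A^ℕ defined by ∂(a)_n = a_{n+1} is a λ-weighted derivation on the k-algebra (A^ℕ, ·^λ): ∂ is k-linear, ∂(J) = 0 for the unit J = (1,0,0,…), and ∂(a ·^λ b) = (∂a) ·^λ b + a ·^λ (∂b) + λ·((∂a) ·^λ (∂b)) for all a, b ∈ A^ℕ. -/
/-- The shift operator `∂(a)_n = a_{n+1}` on sequences. -/
def shiftSeq {A : Type*} (a : ℕ → A) : ℕ → A := fun n => a (n + 1)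

/-! Writing the trinomial coefficient `n! / (r! s! t!)` as `C(n, r) · C(s + t, s)`, two applications
of Pascal's rule express the `(n+1)`-st term of `a ·^λ b` as the `n`-th term of the same sum with
the summand shifted in `r`, in `s` or in `t`. Shifting `r` or `s` replaces `a` or `b` by its shift,
while shifting `t` raises the weight `λ^t` by one factor and shifts both `a` and `b`. -/

open Finset
open scoped Nat

theorem Nat.factorial_add_add_div_eq_choose_mul_choose (r s t : ℕ) :
    (r + (s + t))! / (r ! * s ! * t !) = (r + (s + t)).choose r * (s + t).choose s := by
  refine Nat.div_eq_of_eq_mul_left (by positivity) ?_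
  have hr := Nat.add_choose_mul_factorial_mul_factorial (s + t) r
  have hs := Nat.add_choose_mul_factorial_mul_factorial t s
  rw [add_comm (s + t) r] at hr
  rw [add_comm t s] at hs
  rw [← hr, ← hs]
  ring

section TrinomialSum

variable {M : Type*} [AddCommMonoid M]

/-- `∑_{r+s+t=n} n!/(r! s! t!) • g r s t`, by `Nat.factorial_add_add_div_eq_choose_mul_choose`. -/
def trinomialSum (g : ℕ → ℕ → ℕ → M) (n : ℕ) : M :=
  ∑ x ∈ antidiagonal n, n.choose x.1 • ∑ y ∈ antidiagonal x.2, x.2.choose y.1 • g x.1 y.1 y.2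

theorem trinomialSum_add (g h : ℕ → ℕ → ℕ → M) (n : ℕ) :
    trinomialSum (g + h) n = trinomialSum g n + trinomialSum h n := by
  simp only [trinomialSum, Pi.add_apply, smul_add, sum_add_distrib]

theorem trinomialSum_smul {R : Type*} [Monoid R] [DistribMulAction R M] (c : R)
    (g : ℕ → ℕ → ℕ → M) (n : ℕ) :
    trinomialSum (c • g) n = c • trinomialSum g n := by
  simp only [trinomialSum, Pi.smul_apply, smul_sum, smul_comm c]

theorem sum_antidiagonal_choose_succ_nsmul' (f : ℕ → ℕ → M) (n : ℕ) :
    ∑ ij ∈ antidiagonal (n + 1), (n + 1).choose ij.1 • f ij.1 ij.2 =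
      ∑ ij ∈ antidiagonal n, n.choose ij.1 • (f ij.1 (ij.2 + 1) + f (ij.1 + 1) ij.2) := by
  rw [Finset.sum_antidiagonal_choose_succ_nsmul, ← sum_add_distrib]
  refine sum_congr rfl fun ij hij => ?_
  rw [Nat.choose_symm_of_eq_add (mem_antidiagonal.mp hij).symm, smul_add]

theorem trinomialSum_succ (g : ℕ → ℕ → ℕ → M) (n : ℕ) :
    trinomialSum g (n + 1) =
      trinomialSum (fun r s t => g (r + 1) s t + g r (s + 1) t + g r s (t + 1)) n := by
  rw [trinomialSum, sum_antidiagonal_choose_succ_nsmul'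
    (fun (r u : ℕ) => ∑ y ∈ antidiagonal u, u.choose y.1 • g r y.1 y.2)]
  refine sum_congr rfl fun x _ => ?_
  rw [sum_antidiagonal_choose_succ_nsmul' (fun (s t : ℕ) => g x.1 s t), ← sum_add_distrib]
  congr 1
  refine sum_congr rfl fun y _ => ?_
  rw [← smul_add]
  congr 1
  beta_reduce
  abel

end TrinomialSum

section Hurwitz

variable {k A : Type*} [CommRing k] [Ring A] [Algebra k A]

def hurwitzSummand (lam : k) (a b : ℕ → A) (r s t : ℕ) : A :=
  lam ^ t • (a (r + t) * b (s + t))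

theorem hur_eq_trinomialSum (lam : k) (a b : ℕ → A) (n : ℕ) :
    hur lam a b n = trinomialSum (hurwitzSummand lam a b) n := by
  refine sum_congr rfl fun x hx => ?_
  rw [smul_sum]
  refine sum_congr rfl fun y hy => ?_
  obtain rfl : n = x.1 + (y.1 + y.2) := by
    rw [HasAntidiagonal.mem_antidiagonal] at hx hy
    rw [← hx, ← hy]
  rw [Nat.factorial_add_add_div_eq_choose_mul_choose, mul_smul,
    ← HasAntidiagonal.mem_antidiagonal.mp hy]
  rfl

theorem hurwitzSummand_leibniz (lam : k) (a b : ℕ → A) :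
    (fun r s t => hurwitzSummand lam a b (r + 1) s t + hurwitzSummand lam a b r (s + 1) t +
        hurwitzSummand lam a b r s (t + 1)) =
      hurwitzSummand lam (shiftSeq a) b + hurwitzSummand lam a (shiftSeq b) +
        lam • hurwitzSummand lam (shiftSeq a) (shiftSeq b) := by
  funext r s t
  simp only [hurwitzSummand, shiftSeq, Pi.add_apply, Pi.smul_apply, add_right_comm _ 1, add_assoc]
  rw [pow_succ', mul_smul]

end Hurwitz

theorem stmt13_general {k A : Type*} [CommRing k] [Ring A] [Algebra k A] (lam : k) :
    (∀ a b : ℕ → A, shiftSeq (a + b) = shiftSeq a + shiftSeq b) ∧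
    (∀ (c : k) (a : ℕ → A), shiftSeq (c • a) = c • shiftSeq a) ∧
    (shiftSeq (Jseq A) = 0) ∧
    (∀ a b : ℕ → A,
      shiftSeq (hur lam a b) =
        hur lam (shiftSeq a) b + hur lam a (shiftSeq b) +
          lam • hur lam (shiftSeq a) (shiftSeq b)) := by
  refine ⟨fun a b => rfl, fun c a => rfl, funext fun n => by simp [shiftSeq, Jseq], fun a b => ?_⟩
  funext n
  simp only [shiftSeq, Pi.add_apply, Pi.smul_apply, hur_eq_trinomialSum]
  rw [trinomialSum_succ, hurwitzSummand_leibniz, trinomialSum_add, trinomialSum_add,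
    trinomialSum_smul]

/-- The shift operator `∂(a)_n = a_{n+1}` is a `λ`-weighted derivation
on the `k`-algebra `(A^ℕ, ·^λ)`: it is `k`-linear, `∂(J) = 0`, and
`∂(a ·^λ b) = (∂a) ·^λ b + a ·^λ (∂b) + λ·((∂a) ·^λ (∂b))`. -/
theorem stmt13 {k A : Type*} [CommRing k] [Algebra ℚ k] [Ring A] [Algebra k A] (lam : k) :
    (∀ a b : ℕ → A, shiftSeq (a + b) = shiftSeq a + shiftSeq b) ∧
    (∀ (c : k) (a : ℕ → A), shiftSeq (c • a) = c • shiftSeq a) ∧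
    (shiftSeq (Jseq A) = 0) ∧
    (∀ a b : ℕ → A,
      shiftSeq (hur lam a b) =
        hur lam (shiftSeq a) b + hur lam a (shiftSeq b) +
          lam • hur lam (shiftSeq a) (shiftSeq b)) :=
  stmt13_general lam
end

section
/- Let k be a commutative ring which is a ℚ-algebra, A and B associative unital k-algebras, λ ∈ k, ∂_B a λ-weighted derivation on B, and f : B → A a k-algebra homomorphism. Then the map g : B → A^ℕ defined by g(b)_n = f(∂_B^n(b)) is the unique k-algebra homomorphism from B to (A^ℕ, ·^λ) satisfying g(b)_0 = f(b) and g(∂_B b)_n = g(b)_{n+1} for all b ∈ B and n ∈ ℕ. (This exhibits (A^ℕ, ·^λ) with the shift as the cofree λ-weighted differential algebra on A.) -/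
open Finset
open scoped Nat

theorem Finset.Nat.sum_antidiagonal_antidiagonal_fst {M : Type*} [AddCommMonoid M]
    (f : ℕ → ℕ → ℕ → M) (n : ℕ) :
    ∑ p ∈ antidiagonal n, ∑ q ∈ antidiagonal p.1, f q.1 p.2 q.2
      = ∑ p ∈ antidiagonal n, ∑ q ∈ antidiagonal p.2, f p.1 q.1 q.2 := by
  rw [sum_sigma', sum_sigma']
  refine sum_nbij' (fun a => ⟨(a.2.1, a.1.2 + a.2.2), (a.1.2, a.2.2)⟩)
    (fun a => ⟨(a.1.1 + a.2.2, a.2.1), (a.1.1, a.2.2)⟩) ?_ ?_ ?_ ?_ fun _ _ => rfl <;>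
  · rintro ⟨⟨_, _⟩, _, _⟩ h
    simp only [mem_sigma, HasAntidiagonal.mem_antidiagonal, Sigma.mk.inj_iff, Prod.mk.injEq,
      heq_eq_eq, and_true, true_and] at h ⊢
    omega

theorem Nat.factorial_div_factorial_mul_factorial_mul_factorial {r s t n : ℕ}
    (h : r + s + t = n) :
    n ! / (r ! * s ! * t !) = n.choose s * (r + t).choose t := by
  subst h
  refine Nat.div_eq_of_eq_mul_left (by positivity) ?_
  rw [add_right_comm, ← Nat.add_choose_mul_factorial_mul_factorial (r + t) s,
    ← Nat.add_choose_mul_factorial_mul_factorial r t]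
  ring

namespace WeightedDerivation

variable {k B : Type*} [CommRing k] [Ring B] [Algebra k B] (lam : k) (D : Module.End k B)

/-- When `λ` is invertible, `D = (twist λ D - 1) / λ` is a difference quotient. -/
noncomputable def twist : Module.End k B := 1 + lam • D

lemma twist_apply (b : B) : twist lam D b = b + lam • D b := rfl

lemma commute_twist : Commute D (twist lam D) :=
  (Commute.one_right D).add_right ((Commute.refl D).smul_right lam)

lemma apply_mul_eq_twist (hD : ∀ x y : B, D (x * y) = D x * y + x * D y + lam • (D x * D y))
    (x y : B) : D (x * y) = D x * twist lam D y + x * D y := by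
  rw [hD, twist_apply, mul_add, mul_smul_comm]
  abel

lemma twist_pow_apply (i : ℕ) (y : B) :
    (twist lam D ^ i) y = ∑ q ∈ antidiagonal i, i.choose q.1 • lam ^ q.2 • (D ^ q.2) y := by
  rw [twist, (Commute.one_left (lam • D)).add_pow', LinearMap.sum_apply]
  refine sum_congr rfl fun q _ => ?_
  rw [one_pow, one_mul, smul_pow, LinearMap.smul_apply, LinearMap.smul_apply]

lemma pow_apply_mul_eq_sum_twist
    (hD : ∀ x y : B, D (x * y) = D x * y + x * D y + lam • (D x * D y)) (n : ℕ) (x y : B) :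
    (D ^ n) (x * y) = ∑ p ∈ antidiagonal n,
      n.choose p.1 • ((D ^ p.1) x * (twist lam D ^ p.1) ((D ^ p.2) y)) := by
  set T : ℕ → ℕ → B := fun i j => (D ^ i) x * (twist lam D ^ i) ((D ^ j) y)
  have hT (i j : ℕ) : D (T i j) = T (i + 1) j + T i (j + 1) := by
    have hc (b : B) : D ((twist lam D ^ i) b) = (twist lam D ^ i) (D b) :=
      LinearMap.congr_fun ((commute_twist lam D).pow_right i).eq b
    simp only [T, apply_mul_eq_twist lam D hD, hc, pow_succ', Module.End.mul_apply]
  induction n with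
  | zero => simp
  | succ n ih =>
    change _ = ∑ p ∈ antidiagonal (n + 1), (n + 1).choose p.1 • T p.1 p.2
    rw [sum_antidiagonal_choose_succ_nsmul, pow_succ', Module.End.mul_apply, ih, map_sum, add_comm]
    simp only [T] at hT
    simp only [map_nsmul, hT, smul_add, sum_add_distrib]
    congr 1
    refine sum_congr rfl fun p hp => ?_
    rw [Nat.choose_symm_of_eq_add (HasAntidiagonal.mem_antidiagonal.mp hp).symm]

lemma pow_apply_mul (hD : ∀ x y : B, D (x * y) = D x * y + x * D y + lam • (D x * D y))
    (n : ℕ) (x y : B) :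
    (D ^ n) (x * y) = ∑ p ∈ antidiagonal n, ∑ q ∈ antidiagonal p.2,
      (n ! / (p.1 ! * q.1 ! * q.2 !)) • lam ^ q.2 • ((D ^ (p.1 + q.2)) x * (D ^ (q.1 + q.2)) y) := by
  rw [pow_apply_mul_eq_sum_twist lam D hD, ← Finset.Nat.sum_antidiagonal_antidiagonal_fst
    (fun r s t => (n ! / (r ! * s ! * t !)) • lam ^ t • ((D ^ (r + t)) x * (D ^ (s + t)) y))]
  refine sum_congr rfl fun ⟨i, s⟩ hp => ?_
  rw [twist_pow_apply, mul_sum, smul_sum]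
  refine sum_congr rfl fun ⟨r, t⟩ hq => ?_
  rw [HasAntidiagonal.mem_antidiagonal] at hp hq
  dsimp only at hp hq ⊢
  subst hq
  rw [Nat.factorial_div_factorial_mul_factorial_mul_factorial (by omega : r + s + t = n),
    ← Nat.choose_symm_of_eq_add hp.symm, ← Nat.choose_symm_add, mul_smul_comm, mul_smul_comm,
    mul_smul, add_comm s t, pow_add D t s, Module.End.mul_apply]

end WeightedDerivation

theorem map_pow_apply_one_eq_Jseq {k A B : Type*} [Semiring k] [Semiring B] [Module k B]
    [AddMonoidWithOne A] {D : Module.End k B} (hD : D 1 = 0) {F : B →+ A}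
    (hF : F 1 = 1) : (fun n => F ((D ^ n) 1)) = Jseq A := by
  funext n
  cases n with
  | zero => simpa [Jseq] using hF
  | succ n => simp [Jseq, pow_succ, hD]

theorem map_pow_apply_mul_eq_hur {k A B : Type*} [CommRing k] [Ring A] [Algebra k A] [Ring B]
    [Algebra k B] (lam : k) {D : Module.End k B}
    (hD : ∀ x y : B, D (x * y) = D x * y + x * D y + lam • (D x * D y)) (F : B →ₙₐ[k] A)
    (x y : B) :
    (fun n => F ((D ^ n) (x * y))) = hur lam (fun n => F ((D ^ n) x)) (fun n => F ((D ^ n) y)) := by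
  funext n
  simp only [WeightedDerivation.pow_apply_mul lam D hD, map_sum, map_nsmul, map_smul, map_mul, hur]

theorem stmt14_general {k A B : Type*} [CommRing k] [Ring A] [Algebra k A]
    [Ring B] [Algebra k B] (lam : k)
    (D : B → B)
    (hDadd : ∀ x y : B, D (x + y) = D x + D y)
    (hDsmul : ∀ (c : k) (x : B), D (c • x) = c • D x)
    (hDone : D 1 = 0)
    (hDleib : ∀ x y : B, D (x * y) = D x * y + x * D y + lam • (D x * D y))
    (f : B → A)
    (hfadd : ∀ x y : B, f (x + y) = f x + f y)
    (hfsmul : ∀ (c : k) (x : B), f (c • x) = c • f x)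
    (hfone : f 1 = 1)
    (hfmul : ∀ x y : B, f (x * y) = f x * f y)
    (g : B → ℕ → A) (hg : ∀ (b : B) (n : ℕ), g b n = f (D^[n] b)) :
    (∀ x y : B, g (x + y) = g x + g y) ∧
    (∀ (c : k) (x : B), g (c • x) = c • g x) ∧
    (g 1 = Jseq A) ∧
    (∀ x y : B, g (x * y) = hur lam (g x) (g y)) ∧
    (∀ b : B, g b 0 = f b) ∧
    (∀ (b : B) (n : ℕ), g (D b) n = g b (n + 1)) ∧
    (∀ h : B → ℕ → A,
      (∀ x y : B, h (x + y) = h x + h y) →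
      (∀ (c : k) (x : B), h (c • x) = c • h x) →
      (h 1 = Jseq A) →
      (∀ x y : B, h (x * y) = hur lam (h x) (h y)) →
      (∀ b : B, h b 0 = f b) →
      (∀ (b : B) (n : ℕ), h (D b) n = h b (n + 1)) → h = g) := by
  let Dₗ : Module.End k B := ⟨⟨D, hDadd⟩, hDsmul⟩
  let F : B →ₙₐ[k] A :=
    { toFun := f, map_add' := hfadd, map_smul' := hfsmul, map_mul' := hfmul
      map_zero' := (AddMonoidHom.mk' f hfadd).map_zero }
  have hgF : g = fun b n => F ((Dₗ ^ n) b) := by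
    funext b n
    rw [hg, Module.End.pow_apply]
    rfl
  refine ⟨?_, ?_, ?_, ?_, fun b => hg b 0,
    fun b n => (hg (D b) n).trans (hg b (n + 1)).symm, ?_⟩
  · intro x y; simp only [hgF, map_add]; rfl
  · intro c x; simp only [hgF, map_smul]; rfl
  · rw [hgF]; exact map_pow_apply_one_eq_Jseq (D := Dₗ) hDone (F := (F : B →+ A)) hfone
  · intro x y; rw [hgF]; exact map_pow_apply_mul_eq_hur lam hDleib F x y
  · intro h _ _ _ _ h_zero h_shift
    funext b n
    induction n generalizing b with
    | zero => exact (h_zero b).trans (hg b 0).symm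
    | succ n ih => rw [← h_shift, ih, hg, hg, Function.iterate_succ_apply]

/-- Let `∂_B` be a `λ`-weighted derivation on `B` and `f : B → A` a
`k`-algebra homomorphism.  Then `g(b)_n = f(∂_B^n(b))` is the unique `k`-algebra
homomorphism from `B` to `(A^ℕ, ·^λ)` satisfying `g(b)_0 = f(b)` and
`g(∂_B b)_n = g(b)_{n+1}`.  (This exhibits `(A^ℕ, ·^λ)` with the shift as the cofree
`λ`-weighted differential algebra on `A`.) -/
theorem stmt14 {k A B : Type*} [CommRing k] [Algebra ℚ k] [Ring A] [Algebra k A]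
    [Ring B] [Algebra k B] (lam : k)
    (D : B → B)
    (hDadd : ∀ x y : B, D (x + y) = D x + D y)
    (hDsmul : ∀ (c : k) (x : B), D (c • x) = c • D x)
    (hDone : D 1 = 0)
    (hDleib : ∀ x y : B, D (x * y) = D x * y + x * D y + lam • (D x * D y))
    (f : B → A)
    (hfadd : ∀ x y : B, f (x + y) = f x + f y)
    (hfsmul : ∀ (c : k) (x : B), f (c • x) = c • f x)
    (hfone : f 1 = 1)
    (hfmul : ∀ x y : B, f (x * y) = f x * f y)
    (g : B → ℕ → A) (hg : ∀ (b : B) (n : ℕ), g b n = f (D^[n] b)) :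
    (∀ x y : B, g (x + y) = g x + g y) ∧
    (∀ (c : k) (x : B), g (c • x) = c • g x) ∧
    (g 1 = Jseq A) ∧
    (∀ x y : B, g (x * y) = hur lam (g x) (g y)) ∧
    (∀ b : B, g b 0 = f b) ∧
    (∀ (b : B) (n : ℕ), g (D b) n = g b (n + 1)) ∧
    (∀ h : B → ℕ → A,
      (∀ x y : B, h (x + y) = h x + h y) →
      (∀ (c : k) (x : B), h (c • x) = c • h x) →
      (h 1 = Jseq A) →
      (∀ x y : B, h (x * y) = hur lam (h x) (h y)) →
      (∀ b : B, h b 0 = f b) →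
      (∀ (b : B) (n : ℕ), h (D b) n = h b (n + 1)) → h = g) :=
  stmt14_general lam D hDadd hDsmul hDone hDleib f hfadd hfsmul hfone hfmul g hg
end

section
/- Let k be a commutative ring and let (C', ε, δ) be a counital coassociative k-coalgebra equipped with a point, i.e. a coalgebra morphism η : k → C' (where k carries its canonical coalgebra structure ε = id, δ the canonical isomorphism k ≅ k ⊗ k). Suppose C' is free of rank 2 as a k-module and admits a basis {e', d'} with η(1) = e'. Then there exists λ ∈ k and an isomorphism of pointed k-coalgebras C' ≅ C(λ), i.e. a k-linear bijection Φ : C' → C(λ) with ε_{C(λ)}∘Φ = ε, δ_{C(λ)}∘Φ = (Φ⊗Φ)∘δ, and Φ(η(1)) = e. -/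
open TensorProduct

/-- The basis vector `e` of the free module `C(λ) = k × k`. -/
def eC (k : Type*) [CommRing k] : k × k := (1, 0)

/-- The basis vector `d` of the free module `C(λ) = k × k`. -/
def dC (k : Type*) [CommRing k] : k × k := (0, 1)

/-- The counit of `C(λ)`: `ε(e) = 1`, `ε(d) = 0`. -/
def epsC (k : Type*) [CommRing k] : (k × k) →ₗ[k] k := LinearMap.fst k k k

/-- The comultiplication of `C(λ)`: `δ(e) = e⊗e`, `δ(d) = d⊗e + e⊗d + λ·(d⊗d)`. -/
noncomputable def delC (k : Type*) [CommRing k] (lam : k) :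
    (k × k) →ₗ[k] (k × k) ⊗[k] (k × k) :=
  (LinearMap.fst k k k).smulRight (eC k ⊗ₜ[k] eC k) +
    (LinearMap.snd k k k).smulRight
      (dC k ⊗ₜ[k] eC k + eC k ⊗ₜ[k] dC k + lam • (dC k ⊗ₜ[k] dC k))

/-!
Since `ε(e') = 1`, the transvection `v ↦ v - c(v) ε(d') e'` (with `c` the `d'`-coordinate) turns
`{e', d'}` into a basis `{e, d}` with `e = η 1` and `ε(d) = 0`. Expanding
`δ(d) = Σ cᵢⱼ bᵢ ⊗ bⱼ` in the basis `{e, d}`, the counit laws at `d` read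
`c_ee e + c_ed d = d` and `c_ee e + c_de d = d`, so `c_ee = 0`, `c_ed = c_de = 1` and
`δ(d) = d ⊗ e + e ⊗ d + λ d ⊗ d` with `λ = c_dd`. The coordinate isomorphism of `{e, d}` onto
`k × k` then sends `e ↦ e`, `d ↦ d` and intertwines the counits and comultiplications.
-/

theorem delC_eC (k : Type*) [CommRing k] (lam : k) : delC k lam (eC k) = eC k ⊗ₜ eC k := by
  simp [delC, eC]

theorem delC_dC (k : Type*) [CommRing k] (lam : k) :
    delC k lam (dC k) = dC k ⊗ₜ eC k + eC k ⊗ₜ dC k + lam • (dC k ⊗ₜ dC k) := by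
  simp [delC, dC]

namespace Module.Basis

variable {k C : Type*} [CommRing k] [AddCommGroup C] [Module k C]

theorem exists_fin_two_apply_zero_eq_and_map_apply_one_eq_zero (B : Basis (Fin 2) k C)
    (f : C →ₗ[k] k) (hf : f (B 0) = 1) : ∃ b : Basis (Fin 2) k C, b 0 = B 0 ∧ f (b 1) = 0 := by
  have hcoord : B.coord 1 (-f (B 1) • B 0) = 0 := by simp
  refine ⟨B.map (LinearEquiv.transvection hcoord), ?_, ?_⟩
  · simp [LinearMap.transvection.apply]
  · simp [LinearMap.transvection.apply, hf]

variable (b : Basis (Fin 2) k C)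

theorem eq_zero_and_eq_one_of_smul_add_smul_eq {x y : k} (h : x • b 0 + y • b 1 = b 1) :
    x = 0 ∧ y = 1 :=
  ⟨by simpa using congrArg (b.repr · 0) h, by simpa using congrArg (b.repr · 1) h⟩

theorem tensorProduct_sum_repr_fin_two (x : C ⊗[k] C) :
    x = (b.tensorProduct b).repr x (0, 0) • (b 0 ⊗ₜ b 0) +
      (b.tensorProduct b).repr x (0, 1) • (b 0 ⊗ₜ b 1) +
      (b.tensorProduct b).repr x (1, 0) • (b 1 ⊗ₜ b 0) +
      (b.tensorProduct b).repr x (1, 1) • (b 1 ⊗ₜ b 1) := by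
  conv_lhs => rw [← (b.tensorProduct b).sum_repr x]
  simp only [Fintype.sum_prod_type, Fin.sum_univ_two, tensorProduct_apply, add_assoc]

theorem exists_comul_apply_one_eq_of_counit {eps : C →ₗ[k] k} {del : C →ₗ[k] C ⊗[k] C}
    (h0 : eps (b 0) = 1) (h1 : eps (b 1) = 0)
    (hl : TensorProduct.lid k C (eps.rTensor C (del (b 1))) = b 1)
    (hr : TensorProduct.rid k C (eps.lTensor C (del (b 1))) = b 1) :
    ∃ lam : k, del (b 1) = b 1 ⊗ₜ b 0 + b 0 ⊗ₜ b 1 + lam • (b 1 ⊗ₜ b 1) := by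
  have hexp := b.tensorProduct_sum_repr_fin_two (del (b 1))
  set c := (b.tensorProduct b).repr (del (b 1))
  rw [hexp] at hl hr
  simp only [map_add, map_smul, LinearMap.rTensor_tmul, LinearMap.lTensor_tmul,
    TensorProduct.lid_tmul, TensorProduct.rid_tmul, h0, h1, one_smul, zero_smul, smul_zero,
    add_zero] at hl hr
  obtain ⟨h00, h01⟩ := b.eq_zero_and_eq_one_of_smul_add_smul_eq hl
  obtain ⟨-, h10⟩ := b.eq_zero_and_eq_one_of_smul_add_smul_eq hr
  refine ⟨c (1, 1), ?_⟩
  rw [hexp, h00, h01, h10, zero_smul, one_smul, one_smul]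
  abel

noncomputable def equivFinTwoProd : C ≃ₗ[k] k × k :=
  b.equiv (Basis.finTwoProd k) (Equiv.refl _)

theorem equivFinTwoProd_apply_zero : b.equivFinTwoProd (b 0) = eC k := by
  simp [equivFinTwoProd, eC]

theorem equivFinTwoProd_apply_one : b.equivFinTwoProd (b 1) = dC k := by
  simp [equivFinTwoProd, dC]

theorem epsC_equivFinTwoProd_apply {eps : C →ₗ[k] k} (h0 : eps (b 0) = 1) (h1 : eps (b 1) = 0)
    (v : C) : epsC k (b.equivFinTwoProd v) = eps v := by
  have : epsC k ∘ₗ b.equivFinTwoProd.toLinearMap = eps := by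
    refine b.ext fun i => ?_
    fin_cases i
    · simp [equivFinTwoProd_apply_zero, epsC, eC, h0]
    · simp [equivFinTwoProd_apply_one, epsC, dC, h1]
  exact LinearMap.congr_fun this v

theorem delC_equivFinTwoProd_apply {del : C →ₗ[k] C ⊗[k] C} {lam : k}
    (h0 : del (b 0) = b 0 ⊗ₜ b 0)
    (h1 : del (b 1) = b 1 ⊗ₜ b 0 + b 0 ⊗ₜ b 1 + lam • (b 1 ⊗ₜ b 1)) (v : C) :
    delC k lam (b.equivFinTwoProd v) =
      TensorProduct.map b.equivFinTwoProd.toLinearMap b.equivFinTwoProd.toLinearMap (del v) := by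
  have : delC k lam ∘ₗ b.equivFinTwoProd.toLinearMap =
      TensorProduct.map b.equivFinTwoProd.toLinearMap b.equivFinTwoProd.toLinearMap ∘ₗ del := by
    refine b.ext fun i => ?_
    fin_cases i
    · simp [equivFinTwoProd_apply_zero, h0, delC_eC]
    · simp [equivFinTwoProd_apply_zero, equivFinTwoProd_apply_one, h1, delC_dC]
  exact LinearMap.congr_fun this v

end Module.Basis

theorem stmt19_general {k C' : Type*} [CommRing k] [AddCommGroup C'] [Module k C']
    (eps' : C' →ₗ[k] k) (del' : C' →ₗ[k] C' ⊗[k] C')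
    -- C' is a coassociative counital coalgebra
    (hcol : ∀ v : C', TensorProduct.lid k C' (LinearMap.rTensor C' eps' (del' v)) = v)
    (hcor : ∀ v : C', TensorProduct.rid k C' (LinearMap.lTensor C' eps' (del' v)) = v)
    -- the point η : k → C' is a coalgebra morphism
    (η : k →ₗ[k] C')
    (hηeps : eps' (η 1) = 1)
    (hηdel : del' (η 1) = η 1 ⊗ₜ[k] η 1)
    -- C' is free of rank 2 on a basis {e', d'} with η(1) = e'
    (B : Module.Basis (Fin 2) k C') (hB : B 0 = η 1) :
    ∃ (lam : k) (Φ : C' ≃ₗ[k] k × k),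
      (∀ v : C', epsC k (Φ v) = eps' v) ∧
      (∀ v : C',
        delC k lam (Φ v) =
          TensorProduct.map Φ.toLinearMap Φ.toLinearMap (del' v)) ∧
      Φ (η 1) = eC k := by
  rw [← hB] at hηeps hηdel ⊢
  obtain ⟨b, hb0, hb1⟩ := B.exists_fin_two_apply_zero_eq_and_map_apply_one_eq_zero eps' hηeps
  rw [← hb0] at hηeps hηdel ⊢
  obtain ⟨lam, hlam⟩ := b.exists_comul_apply_one_eq_of_counit hηeps hb1 (hcol _) (hcor _)
  exact ⟨lam, b.equivFinTwoProd, b.epsC_equivFinTwoProd_apply hηeps hb1,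
    b.delC_equivFinTwoProd_apply hηdel hlam, b.equivFinTwoProd_apply_zero⟩

/-- Let `(C', ε, δ)` be a counital coassociative `k`-coalgebra pointed
by a coalgebra morphism `η : k → C'`, and suppose `C'` is free of rank 2 with a basis
`{e', d'}` such that `η(1) = e'`.  Then there exist `λ ∈ k` and an isomorphism of pointed
`k`-coalgebras `C' ≅ C(λ)`: a `k`-linear bijection `Φ : C' → C(λ)` with
`ε_{C(λ)}∘Φ = ε`, `δ_{C(λ)}∘Φ = (Φ⊗Φ)∘δ` and `Φ(η(1)) = e`. -/
theorem stmt19 {k C' : Type*} [CommRing k] [AddCommGroup C'] [Module k C']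
    (eps' : C' →ₗ[k] k) (del' : C' →ₗ[k] C' ⊗[k] C')
    -- C' is a coassociative counital coalgebra
    (hcoassoc : ∀ v : C',
      TensorProduct.assoc k C' C' C' (LinearMap.rTensor C' del' (del' v)) =
        LinearMap.lTensor C' del' (del' v))
    (hcol : ∀ v : C', TensorProduct.lid k C' (LinearMap.rTensor C' eps' (del' v)) = v)
    (hcor : ∀ v : C', TensorProduct.rid k C' (LinearMap.lTensor C' eps' (del' v)) = v)
    -- the point η : k → C' is a coalgebra morphism
    (η : k →ₗ[k] C')
    (hηeps : eps' (η 1) = 1)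
    (hηdel : del' (η 1) = η 1 ⊗ₜ[k] η 1)
    -- C' is free of rank 2 on a basis {e', d'} with η(1) = e'
    (B : Module.Basis (Fin 2) k C') (hB : B 0 = η 1) :
    ∃ (lam : k) (Φ : C' ≃ₗ[k] k × k),
      (∀ v : C', epsC k (Φ v) = eps' v) ∧
      (∀ v : C',
        delC k lam (Φ v) =
          TensorProduct.map Φ.toLinearMap Φ.toLinearMap (del' v)) ∧
      Φ (η 1) = eC k :=
  stmt19_general eps' del' hcol hcor η hηeps hηdel B hB
end
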